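/- arXiv:2501.02374 — 2 statements merged into one kernel-verified Lean document; each statement's English description precedes it below -/
import Mathlib

section
/- Let Σ be a finite alphabet, ν a type of length n (an empirical measure of some word in Σ^n), and T_n(ν) = {ω ∈ Σ^n : L_n^ω = ν} its type class. Then (n+1)^{−|Σ|} e^{n H(ν)} ≤ |T_n(ν)| ≤ e^{n H(ν)}, where H is Shannon entropy with natural logarithm. -/
open Finset

section Helpers

open Nat Equiv MulAction

set_option linter.unusedSectionVars false

variable {n : ℕ} {A : Type*} [Fintype A] [DecidableEq A]

lemma L1 (c m : ℕ) : (c + m)! ≤ c ! * (c + m) ^ m := by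
  induction m with
  | zero => simp
  | succ m ih =>
      calc (c + (m+1))! = (c + m + 1) * (c + m)! := by
            rw [← Nat.add_assoc, Nat.factorial_succ]
        _ ≤ (c + m + 1) * (c ! * (c + m) ^ m) := Nat.mul_le_mul_left _ ih
        _ ≤ (c + m + 1) * (c ! * (c + m + 1) ^ m) :=
            Nat.mul_le_mul_left _ (Nat.mul_le_mul_left _ (Nat.pow_le_pow_left (by omega) _))
        _ = c ! * (c + m + 1) ^ (m + 1) := by ring

lemma L2 (k c : ℕ) : k ! * k ^ c ≤ c ! * k ^ k := by
  rcases le_or_gt c k with h | h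
  · obtain ⟨m, rfl⟩ := Nat.exists_eq_add_of_le h
    calc (c + m)! * (c+m) ^ c ≤ (c ! * (c+m) ^ m) * (c+m) ^ c :=
          Nat.mul_le_mul_right _ (L1 c m)
      _ = c ! * (c+m) ^ (c+m) := by rw [mul_assoc, ← pow_add, Nat.add_comm m c]
  · obtain ⟨m, rfl⟩ := Nat.exists_eq_add_of_lt h
    calc k ! * k ^ (k + m + 1) = (k ! * k ^ (m+1)) * k ^ k := by
          rw [mul_assoc, ← pow_add]; ring_nf
      _ ≤ (k ! * (k+1) ^ (m+1)) * k ^ k :=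
          Nat.mul_le_mul_right _ (Nat.mul_le_mul_left _ (Nat.pow_le_pow_left (by omega) _))
      _ ≤ (k + (m+1))! * k ^ k := Nat.mul_le_mul_right _ Nat.factorial_mul_pow_le_factorial
      _ = (k + m + 1)! * k ^ k := by rw [← Nat.add_assoc]


def cnt (ω : Fin n → A) (a : A) : ℕ := (Finset.univ.filter fun j => ω j = a).card

lemma card_fiber (ω : Fin n → A) (a : A) : Fintype.card {j // ω j = a} = cnt ω a := by
  simp [cnt, Fintype.card_subtype]

lemma cnt_comp (ω : Fin n → A) (σ : Equiv.Perm (Fin n)) : cnt (ω ∘ σ) = cnt ω := by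
  funext a
  unfold cnt
  apply Finset.card_bij' (fun j _ => σ j) (fun j _ => σ.symm j) <;> simp

lemma exists_perm {ω ω' : Fin n → A} (h : cnt ω' = cnt ω) :
    ∃ σ : Equiv.Perm (Fin n), ω ∘ σ = ω' := by
  have e : ∀ a, {j // ω' j = a} ≃ {j // ω j = a} := fun a =>
    Fintype.equivOfCardEq (by rw [card_fiber, card_fiber, h])
  refine ⟨(Equiv.sigmaFiberEquiv ω').symm.trans
    ((Equiv.sigmaCongrRight e).trans (Equiv.sigmaFiberEquiv ω)), ?_⟩
  funext j
  have : (Equiv.sigmaFiberEquiv ω').symm j = ⟨ω' j, ⟨j, rfl⟩⟩ := rfl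
  simp [this, Equiv.sigmaCongrRight, Equiv.sigmaFiberEquiv]
  exact (e (ω' j) ⟨j, rfl⟩).2

lemma sum_cnt (ω : Fin n → A) : ∑ a, cnt ω a = n := by
  have h := Finset.card_eq_sum_card_fiberwise
    (s := (Finset.univ : Finset (Fin n))) (t := Finset.univ) (f := ω)
    (fun x _ => Finset.mem_univ _)
  simpa [cnt] using h.symm

lemma card_class (ω : Fin n → A) :
    Nat.card {ω' : Fin n → A // cnt ω' = cnt ω} * ∏ a, (cnt ω a)! = n ! := by
  classical
  have horb : ∀ ω' : Fin n → A, ω' ∈ orbit (Equiv.Perm (Fin n))ᵈᵐᵃ ω ↔ cnt ω' = cnt ω := by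
    intro ω'
    constructor
    · rintro ⟨g, rfl⟩
      exact cnt_comp ω (DomMulAct.mk.symm g)
    · intro h
      obtain ⟨σ, hσ⟩ := exists_perm h
      exact ⟨DomMulAct.mk σ, hσ⟩
  have h1 : Nat.card {ω' : Fin n → A // cnt ω' = cnt ω} =
      Nat.card (orbit (Equiv.Perm (Fin n))ᵈᵐᵃ ω) :=
    Nat.card_congr (Equiv.subtypeEquivRight fun x => (horb x).symm)
  have h2 : Nat.card (stabilizer (Equiv.Perm (Fin n))ᵈᵐᵃ ω) = ∏ a, (cnt ω a)! := by
    rw [Nat.card_congr (Equiv.subtypeEquiv (p := fun g => g ∈ stabilizer (Equiv.Perm (Fin n))ᵈᵐᵃ ω)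
      (q := fun σ : Equiv.Perm (Fin n) => ω ∘ σ = ω) DomMulAct.mk.symm
      (fun g => DomMulAct.mem_stabilizer_iff)), Nat.card_eq_fintype_card,
      DomMulAct.stabilizer_card]
    exact Finset.prod_congr rfl fun a _ => by rw [card_fiber]
  have h3 := Nat.card_congr (MulAction.orbitProdStabilizerEquivGroup (Equiv.Perm (Fin n))ᵈᵐᵃ ω)
  rw [Nat.card_prod] at h3
  rw [h1, ← h2, h3, Nat.card_congr (DomMulAct.mk.symm : (Equiv.Perm (Fin n))ᵈᵐᵃ ≃ _),
    Nat.card_eq_fintype_card, Fintype.card_perm, Fintype.card_fin]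


lemma max_class (ω₀ ω' : Fin n → A) :
    Nat.card {ω : Fin n → A // cnt ω = cnt ω'} * ∏ a, (cnt ω₀ a) ^ (cnt ω' a) ≤
    Nat.card {ω : Fin n → A // cnt ω = cnt ω₀} * ∏ a, (cnt ω₀ a) ^ (cnt ω₀ a) := by
  set k := cnt ω₀
  set c := cnt ω'
  set Nc := Nat.card {ω : Fin n → A // cnt ω = c}
  set Nk := Nat.card {ω : Fin n → A // cnt ω = k}
  have hA : 0 < ∏ a, (c a)! := Finset.prod_pos fun a _ => Nat.factorial_pos _
  have hB : 0 < ∏ a, (k a)! := Finset.prod_pos fun a _ => Nat.factorial_pos _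
  have key : (∏ a, (k a)!) * ∏ a, (k a) ^ (c a) ≤ (∏ a, (c a)!) * ∏ a, (k a) ^ (k a) := by
    rw [← Finset.prod_mul_distrib, ← Finset.prod_mul_distrib]
    exact Finset.prod_le_prod' fun a _ => L2 (k a) (c a)
  have e1 : Nc * ∏ a, (c a)! = n ! := card_class ω'
  have e2 : Nk * ∏ a, (k a)! = n ! := card_class ω₀
  refine Nat.le_of_mul_le_mul_right ?_ (Nat.mul_pos hA hB)
  calc Nc * (∏ a, k a ^ c a) * ((∏ a, (c a)!) * ∏ a, (k a)!)
      = (Nc * ∏ a, (c a)!) * ((∏ a, (k a)!) * ∏ a, (k a) ^ (c a)) := by ring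
    _ = n ! * ((∏ a, (k a)!) * ∏ a, (k a) ^ (c a)) := by rw [e1]
    _ ≤ n ! * ((∏ a, (c a)!) * ∏ a, (k a) ^ (k a)) := Nat.mul_le_mul_left _ key
    _ = (Nk * ∏ a, (k a)!) * ((∏ a, (c a)!) * ∏ a, (k a) ^ (k a)) := by rw [e2]
    _ = Nk * (∏ a, k a ^ k a) * ((∏ a, (c a)!) * ∏ a, (k a)!) := by ring

lemma prod_eval (ν : A → ℝ) (ω : Fin n → A) : ∏ j, ν (ω j) = ∏ a, ν a ^ (cnt ω a) := by
  calc ∏ j, ν (ω j)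
      = ∏ a, ∏ j ∈ Finset.univ.filter fun j => ω j = a, ν (ω j) :=
        (Finset.prod_fiberwise_of_maps_to (fun j _ => Finset.mem_univ (ω j)) _).symm
    _ = ∏ a, ν a ^ cnt ω a := by
        refine Finset.prod_congr rfl fun a _ => ?_
        rw [Finset.prod_congr rfl (fun j hj => by
          rw [(Finset.mem_filter.mp hj).2] : ∀ j ∈ Finset.univ.filter fun j => ω j = a,
            ν (ω j) = ν a), Finset.prod_const, cnt]

lemma sum_all (ν : A → ℝ) (h1 : ∑ a, ν a = 1) :
    ∑ ω : Fin n → A, ∏ j, ν (ω j) = 1 := by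
  have := Finset.prod_univ_sum (fun _ : Fin n => (Finset.univ : Finset A)) (fun _ a => ν a)
  rw [Fintype.piFinset_univ] at this
  simp only [h1, Finset.prod_const_one] at this
  exact this.symm


end Helpers

noncomputable section

/-- The empirical measure (type) of a word `ω ∈ Alphabet^n`, as a probability vector on `Alphabet`. -/
def empiricalMeasure {n : ℕ} {Alphabet : Type*} [Fintype Alphabet] [DecidableEq Alphabet]
    (ω : Fin n → Alphabet) : Alphabet → ℝ :=
  fun a => ((Finset.univ.filter fun j => ω j = a).card : ℝ) / n

/-- Shannon entropy with the natural logarithm. -/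
def entropyNat {Alphabet : Type*} [Fintype Alphabet] (ν : Alphabet → ℝ) : ℝ :=
  -∑ a, ν a * Real.log (ν a)

theorem stmt_14 (Alphabet : Type*) [Fintype Alphabet] [DecidableEq Alphabet] (n : ℕ) (hn : 1 ≤ n)
    (ν : Alphabet → ℝ) (hν : ∃ ω₀ : Fin n → Alphabet, ν = empiricalMeasure ω₀) :
    ((n : ℝ) + 1)⁻¹ ^ (Fintype.card Alphabet) * Real.exp (n * entropyNat ν) ≤
        (Nat.card {ω : Fin n → Alphabet // empiricalMeasure ω = ν} : ℝ) ∧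
      (Nat.card {ω : Fin n → Alphabet // empiricalMeasure ω = ν} : ℝ) ≤
        Real.exp (n * entropyNat ν) := by
  classical
  obtain ⟨ω₀, rfl⟩ := hν
  set ν := empiricalMeasure ω₀ with hνdef
  have hnR : (0:ℝ) < n := by exact_mod_cast hn
  have hνeq : ∀ a, ν a = (cnt ω₀ a : ℝ) / n := fun a => rfl
  have hν0 : ∀ a, 0 ≤ ν a := fun a => by rw [hνeq]; positivity
  have hsub : ∀ ω : Fin n → Alphabet, empiricalMeasure ω = ν ↔ cnt ω = cnt ω₀ := by
    intro ω
    constructor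
    · intro h
      funext a
      have h2 : (cnt ω a : ℝ) / n = (cnt ω₀ a : ℝ) / n := congrFun h a
      rw [div_eq_div_iff (ne_of_gt hnR) (ne_of_gt hnR), mul_left_inj' (ne_of_gt hnR)] at h2
      exact_mod_cast h2
    · intro h
      funext a
      show (cnt ω a : ℝ) / n = ν a
      rw [hνeq, h]
  set N := Nat.card {ω : Fin n → Alphabet // cnt ω = cnt ω₀} with hN
  have hNcard : Nat.card {ω : Fin n → Alphabet // empiricalMeasure ω = ν} = N :=
    Nat.card_congr (Equiv.subtypeEquivRight hsub)
  have hsum1 : ∑ a, ν a = 1 := by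
    rw [Finset.sum_congr rfl fun a _ => hνeq a, ← Finset.sum_div]
    rw [show ∑ a, (cnt ω₀ a : ℝ) = (n : ℝ) by exact_mod_cast congrArg Nat.cast (sum_cnt ω₀)]
    field_simp
  -- the exponential identity
  have hE : ∏ a, ν a ^ (cnt ω₀ a) = Real.exp (-((n : ℝ) * entropyNat ν)) := by
    have hterm : ∀ a, ν a ^ (cnt ω₀ a) = Real.exp ((cnt ω₀ a : ℝ) * Real.log (ν a)) := by
      intro a
      rcases Nat.eq_zero_or_pos (cnt ω₀ a) with h | h
      · simp [h]
      · have hpos : 0 < ν a := by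
          rw [hνeq]
          have : (0:ℝ) < (cnt ω₀ a : ℝ) := by exact_mod_cast h
          positivity
        rw [Real.exp_nat_mul, Real.exp_log hpos]
    rw [Finset.prod_congr rfl fun a _ => hterm a, ← Real.exp_sum]
    congr 1
    have : ∀ a, (cnt ω₀ a : ℝ) * Real.log (ν a) = (n:ℝ) * (ν a * Real.log (ν a)) := by
      intro a
      rw [hνeq a]
      field_simp
    rw [Finset.sum_congr rfl fun a _ => this a, ← Finset.mul_sum, entropyNat]
    ring
  have hEpos : (0:ℝ) < Real.exp ((n : ℝ) * entropyNat ν) := Real.exp_pos _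
  have hsumall : ∑ ω : Fin n → Alphabet, ∏ j, ν (ω j) = 1 := sum_all ν hsum1
  have hNfilter : ∀ ω' : Fin n → Alphabet,
      ((Finset.univ.filter fun ω : Fin n → Alphabet => cnt ω = cnt ω').card : ℕ) =
      Nat.card {ω : Fin n → Alphabet // cnt ω = cnt ω'} := by
    intro ω'
    rw [Nat.card_eq_fintype_card, Fintype.card_subtype]
  -- class sums
  have hclass : ∀ ω' : Fin n → Alphabet,
      ∑ ω ∈ Finset.univ.filter (fun ω : Fin n → Alphabet => cnt ω = cnt ω'), ∏ j, ν (ω j) =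
      (Nat.card {ω : Fin n → Alphabet // cnt ω = cnt ω'} : ℝ) * ∏ a, ν a ^ (cnt ω' a) := by
    intro ω'
    rw [Finset.sum_congr rfl (fun ω hω => by
      rw [prod_eval, (Finset.mem_filter.mp hω).2]), Finset.sum_const, ← hNfilter ω',
      nsmul_eq_mul]
  -- upper bound
  have hupper : (N : ℝ) * Real.exp (-((n : ℝ) * entropyNat ν)) ≤ 1 := by
    rw [← hE, ← hclass ω₀, ← hsumall]
    exact Finset.sum_le_sum_of_subset_of_nonneg (Finset.subset_univ _)
      (fun ω _ _ => Finset.prod_nonneg fun j _ => hν0 _)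
  -- maximality, real version
  have hmax : ∀ ω' : Fin n → Alphabet,
      (Nat.card {ω : Fin n → Alphabet // cnt ω = cnt ω'} : ℝ) * ∏ a, ν a ^ (cnt ω' a) ≤
      (N : ℝ) * Real.exp (-((n : ℝ) * entropyNat ν)) := by
    intro ω'
    rw [← hE]
    have hprod : ∀ ω'' : Fin n → Alphabet, ∏ a, ν a ^ (cnt ω'' a) =
        (∏ a, (cnt ω₀ a : ℝ) ^ (cnt ω'' a)) / (n : ℝ) ^ n := by
      intro ω''
      rw [Finset.prod_congr rfl fun a _ => by rw [hνeq a, div_pow],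
        Finset.prod_div_distrib, Finset.prod_pow_eq_pow_sum]
      rw [sum_cnt ω'']
    rw [hprod ω', hprod ω₀, ← mul_div_assoc, ← mul_div_assoc]
    have hnum : ((Nat.card {ω : Fin n → Alphabet // cnt ω = cnt ω'} : ℝ) *
        ∏ a, (cnt ω₀ a : ℝ) ^ (cnt ω' a)) ≤
        (N : ℝ) * ∏ a, (cnt ω₀ a : ℝ) ^ (cnt ω₀ a) := by
      exact_mod_cast max_class ω₀ ω'
    exact (div_le_div_iff_of_pos_right (by positivity)).mpr hnum
  -- decomposition over types
  set T := Finset.image (fun ω : Fin n → Alphabet => cnt ω) Finset.univ with hT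
  have hsplit : (1:ℝ) = ∑ c ∈ T, ∑ ω ∈ Finset.univ.filter fun ω : Fin n → Alphabet => cnt ω = c,
      ∏ j, ν (ω j) := by
    rw [← hsumall]
    exact (Finset.sum_fiberwise_of_maps_to
      (fun ω _ => Finset.mem_image_of_mem _ (Finset.mem_univ ω)) _).symm
  have hone : (1:ℝ) ≤ (T.card : ℝ) * ((N:ℝ) * Real.exp (-((n:ℝ) * entropyNat ν))) := by
    rw [hsplit]
    calc ∑ c ∈ T, ∑ ω ∈ Finset.univ.filter fun ω : Fin n → Alphabet => cnt ω = c, ∏ j, ν (ω j)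
        ≤ ∑ _c ∈ T, (N:ℝ) * Real.exp (-((n:ℝ) * entropyNat ν)) := by
          refine Finset.sum_le_sum fun c hc => ?_
          obtain ⟨ω', -, rfl⟩ := Finset.mem_image.mp hc
          rw [hclass ω']
          exact hmax ω'
      _ = (T.card : ℝ) * ((N:ℝ) * Real.exp (-((n:ℝ) * entropyNat ν))) := by
          rw [Finset.sum_const, nsmul_eq_mul]
  have hcle : ∀ c ∈ T, ∀ a, c a ≤ n := by
    intro c hc a
    obtain ⟨ω', -, rfl⟩ := Finset.mem_image.mp hc
    calc cnt ω' a ≤ (Finset.univ : Finset (Fin n)).card := Finset.card_filter_le _ _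
      _ = n := by simp
  have hTcard : (T.card : ℝ) ≤ ((n:ℝ)+1) ^ Fintype.card Alphabet := by
    have h1 : T.card ≤ (n+1) ^ Fintype.card Alphabet := by
      have h2 := Finset.card_le_card_of_injOn (s := T) (t := (Finset.univ : Finset (Alphabet → Fin (n+1))))
        (fun (c : Alphabet → ℕ) (a : Alphabet) => (⟨min (c a) n, by omega⟩ : Fin (n+1)))
        (fun c _ => Finset.mem_univ _) ?_
      · rwa [Finset.card_univ, Fintype.card_fun, Fintype.card_fin] at h2
      · intro c hc c' hc' h
        funext a
        have h3 := congrFun h a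
        simp only [Fin.mk.injEq] at h3
        have := hcle c hc a
        have := hcle c' hc' a
        omega
    calc (T.card:ℝ) ≤ (((n+1) ^ Fintype.card Alphabet : ℕ) : ℝ) := by exact_mod_cast h1
      _ = ((n:ℝ)+1) ^ Fintype.card Alphabet := by push_cast; ring
  constructor
  · rw [hNcard, inv_pow, inv_mul_le_iff₀ (by positivity)]
    have h4 : (1:ℝ) ≤ ((n:ℝ)+1) ^ Fintype.card Alphabet *
        ((N:ℝ) * Real.exp (-((n:ℝ) * entropyNat ν))) := by
      refine le_trans hone (mul_le_mul_of_nonneg_right hTcard (by positivity))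
    rw [Real.exp_neg, ← mul_assoc, ← div_eq_mul_inv, one_le_div hEpos] at h4
    linarith [h4]
  · rw [hNcard]
    rw [Real.exp_neg, ← div_eq_mul_inv, div_le_one hEpos] at hupper
    exact hupper

end
end

section
/- Let F = {f_i(x) = x/N + i/N}_{i∈Γ} be an IFS on [0,1]^d with Γ ⊊ {0,…,N−1}^d, and K its attractor. There exist a finite set V ⊆ ℤ^d\{0} and δ > 0 such that for every probability vector p on Γ there exists v ∈ V with H(M(Π_v p)) ≤ 1 − δ, where Π_v p is the pushforward of p under i ↦ i·v, M reduces mod N, and H is Shannon entropy base N on {0,…,N−1}. -/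
open Finset

noncomputable section

/-- Shannon entropy with logarithm base `N`. -/
def entropyBase (N : ℕ) (ν : Fin N → ℝ) : ℝ :=
  -∑ a, ν a * Real.logb N (ν a)

/-!
Reduce a probability vector `p` on `Γ` mod `N` to a probability vector `Q` on `(ZMod N)^d`.
If every nonzero linear form `x ↦ x ⬝ᵥ w` pushed `Q` forward to the uniform distribution on
`ZMod N`, double counting the pairs `(w, x)` with `(x - a) ⬝ᵥ w = 0` (for each `x` at least
`N^(d-1)` such `w`, and all `N^d` when `x = a`) would give `Q a ≤ N^(-d)` for all `a`, so `Q`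
would be uniform. But `Q` vanishes on the class of a digit `i₀ ∉ Γ`, so some projection is
non-uniform and, by strict concavity of `x ↦ -x log x`, has entropy `< 1`. The minimum over the
finitely many `w` of these entropies is continuous in `p`, so on the compact simplex its maximum
is some `1 - δ < 1`.
-/

theorem entropyBase_eq_sum_negMulLog_div (N : ℕ) (ν : Fin N → ℝ) :
    entropyBase N ν = (∑ a, Real.negMulLog (ν a)) / Real.log N := by
  simp only [entropyBase, Real.negMulLog, Real.logb, sum_div, ← sum_neg_distrib]
  congr 1 with a
  ring

theorem continuous_entropyBase (N : ℕ) : Continuous (entropyBase N) := by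
  simp_rw [funext (entropyBase_eq_sum_negMulLog_div N)]
  fun_prop

theorem entropyBase_lt_one {N : ℕ} (hN : 1 < N) {ν : Fin N → ℝ} (hν0 : ∀ a, 0 ≤ ν a)
    (hν1 : ∑ a, ν a = 1) (hν : ∃ a, ν a ≠ (N : ℝ)⁻¹) : entropyBase N ν < 1 := by
  have hlog : 0 < Real.log N := Real.log_pos (by exact_mod_cast hN)
  have hnonconst : ∃ j ∈ univ, ∃ k ∈ univ, ν j ≠ ν k := by
    by_contra! hconst
    obtain ⟨a, ha⟩ := hν
    have : ∑ b, ν b = N * ν a := by simp [hconst _ _ a, card_univ]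
    exact ha (by field_simp; linarith)
  have hjensen := Real.strictConcaveOn_negMulLog.lt_map_sum (t := univ) (w := fun _ => (N : ℝ)⁻¹)
    (fun _ _ => by positivity) (by simp [card_univ]; field_simp) (fun a _ => hν0 a)
    hnonconst
  simp only [smul_eq_mul, ← mul_sum, hν1, mul_one, Real.negMulLog, Real.log_inv] at hjensen
  rw [neg_mul_neg] at hjensen
  rw [entropyBase_eq_sum_negMulLog_div, div_lt_one hlog]
  exact lt_of_mul_lt_mul_left hjensen (by positivity)

theorem AddMonoidHom.card_le_card_ker_mul {G H : Type*} [AddGroup G] [AddGroup H] [Finite H]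
    (f : G →+ H) : Nat.card G ≤ Nat.card f.ker * Nat.card H := by
  rw [← f.ker.card_mul_index, AddSubgroup.index_ker]
  exact Nat.mul_le_mul_left _ (AddSubgroup.card_le_card_addGroup _)

namespace ZMod

variable {N d : ℕ} [NeZero N]

theorem sum_sum_dotProduct_eq (Q : (Fin d → ZMod N) → ℝ) (a : Fin d → ZMod N) :
    ∑ w, ∑ x with x ⬝ᵥ w = a ⬝ᵥ w, Q x = ∑ x, Q x * #{w | (x - a) ⬝ᵥ w = 0} := by
  simp_rw [sum_filter, sub_dotProduct, sub_eq_zero]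
  rw [sum_comm]
  simp [sum_ite, mul_comm]

theorem pow_le_mul_card_dotProduct_eq_zero (u : Fin d → ZMod N) :
    N ^ d ≤ N * #{w | u ⬝ᵥ w = 0} := by
  have h := (AddMonoidHom.mk' (u ⬝ᵥ ·) (dotProduct_add u)).card_le_card_ker_mul
  rw [Nat.card_eq_fintype_card, Fintype.card_pi, Nat.card_zmod] at h
  simp only [Fintype.card_fin, prod_const, card_univ, ZMod.card] at h
  rw [mul_comm]
  convert h using 2
  rw [Nat.card_eq_fintype_card, ← Fintype.card_subtype]
  exact Fintype.card_congr (Equiv.subtypeEquivRight fun w => by simp [AddMonoidHom.mem_ker])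

theorem apply_le_inv_of_sum_dotProduct_eq (hN : 1 < N) {Q : (Fin d → ZMod N) → ℝ}
    (hQ0 : ∀ x, 0 ≤ Q x) (hQ1 : ∑ x, Q x = 1)
    (hQ : ∀ w ≠ 0, ∀ s, ∑ x with x ⬝ᵥ w = s, Q x = (N : ℝ)⁻¹) (a : Fin d → ZMod N) :
    Q a ≤ ((N : ℝ) ^ d)⁻¹ := by
  have hN' : (1 : ℝ) < N := by exact_mod_cast hN
  have hcard : (Fintype.card (Fin d → ZMod N) : ℝ) = (N : ℝ) ^ d := by simp [ZMod.card]
  have hlhs : ∑ w, ∑ x with x ⬝ᵥ w = a ⬝ᵥ w, Q x = 1 + ((N : ℝ) ^ d - 1) / N := by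
    rw [← add_sum_erase _ _ (mem_univ 0)]
    simp only [dotProduct_zero, filter_true, hQ1]
    rw [sum_congr rfl fun w hw => hQ w (ne_of_mem_erase hw) _, sum_const,
      card_erase_of_mem (mem_univ _), card_univ, nsmul_eq_mul,
      Nat.cast_sub Fintype.card_pos, hcard]
    ring
  have hker : ∀ x, ((N : ℝ) ^ d / N + if x = a then (N : ℝ) ^ d - (N : ℝ) ^ d / N else 0)
      ≤ #{w | (x - a) ⬝ᵥ w = 0} := by
    intro x
    split_ifs with hx
    · simp only [hx, sub_self, zero_dotProduct, filter_true, card_univ, hcard]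
      linarith
    · rw [add_zero, div_le_iff₀ (by positivity), mul_comm]
      exact_mod_cast pow_le_mul_card_dotProduct_eq_zero (x - a)
  have hrhs : (N : ℝ) ^ d / N + Q a * ((N : ℝ) ^ d - (N : ℝ) ^ d / N)
      ≤ ∑ x, Q x * #{w | (x - a) ⬝ᵥ w = 0} :=
    calc _ = ∑ x, Q x * ((N : ℝ) ^ d / N
          + if x = a then (N : ℝ) ^ d - (N : ℝ) ^ d / N else 0) := by
          simp [mul_add, sum_add_distrib, ← sum_mul, hQ1]
      _ ≤ _ := sum_le_sum fun x _ => mul_le_mul_of_nonneg_left (hker x) (hQ0 x)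
  rw [← sum_sum_dotProduct_eq, hlhs] at hrhs
  have hNd : (0 : ℝ) < (N : ℝ) ^ d := by positivity
  have key : (Q a * (N : ℝ) ^ d - 1) * ((N : ℝ) - 1) ≤ 0 := by
    have := mul_le_mul_of_nonneg_left hrhs (by positivity : (0 : ℝ) ≤ N)
    field_simp at this
    nlinarith
  rw [← one_div, le_div_iff₀ hNd]
  nlinarith

theorem exists_sum_dotProduct_ne_of_apply_eq_zero (hN : 1 < N) {Q : (Fin d → ZMod N) → ℝ}
    (hQ0 : ∀ x, 0 ≤ Q x) (hQ1 : ∑ x, Q x = 1) {a : Fin d → ZMod N} (ha : Q a = 0) :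
    ∃ w ≠ 0, ∃ s, ∑ x with x ⬝ᵥ w = s, Q x ≠ (N : ℝ)⁻¹ := by
  by_contra! h
  have hlt : ∑ x, Q x < ∑ _x : Fin d → ZMod N, ((N : ℝ) ^ d)⁻¹ :=
    sum_lt_sum (fun x _ => apply_le_inv_of_sum_dotProduct_eq hN hQ0 hQ1 h x)
      ⟨a, mem_univ _, by rw [ha]; positivity⟩
  simp [hQ1, ZMod.card] at hlt

theorem finEquiv_apply (r : Fin N) : finEquiv N r = ((r : ℕ) : ZMod N) := by
  obtain _ | n := N
  · exact absurd rfl (NeZero.ne 0)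
  · exact (Fin.cast_val_eq_self r).symm

theorem intCast_eq_finEquiv_iff (x : ℤ) (r : Fin N) :
    (x : ZMod N) = finEquiv N r ↔ x % N = r := by
  rw [finEquiv_apply, ← Int.cast_natCast, intCast_eq_intCast_iff',
    Int.emod_eq_of_lt (a := r) (by positivity) (by exact_mod_cast r.isLt)]

end ZMod

theorem IsCompact.exists_pos_forall_exists_le_sub {X ι : Type*} [TopologicalSpace X] [Fintype ι]
    {K : Set X} (hK : IsCompact K) {f : ι → X → ℝ} (hf : ∀ i, Continuous (f i)) {c : ℝ}
    (hlt : ∀ x ∈ K, ∃ i, f i x < c) : ∃ δ > 0, ∀ x ∈ K, ∃ i, f i x ≤ c - δ := by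
  rcases K.eq_empty_or_nonempty with rfl | ⟨x₀, hx₀⟩
  · exact ⟨1, one_pos, by simp⟩
  have hι : (univ : Finset ι).Nonempty := ⟨(hlt x₀ hx₀).choose, mem_univ _⟩
  obtain ⟨x₁, hx₁, hmax⟩ := hK.exists_isMaxOn ⟨x₀, hx₀⟩
    (Continuous.finset_inf'_apply hι fun i _ => hf i).continuousOn
  obtain ⟨i₁, hi₁⟩ := hlt x₁ hx₁
  refine ⟨c - univ.inf' hι (f · x₁), sub_pos.2 ((inf'_le _ (mem_univ i₁)).trans_lt hi₁),
    fun x hx => ?_⟩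
  obtain ⟨i, -, hi⟩ := exists_mem_eq_inf' hι (f · x)
  exact ⟨i, by rw [sub_sub_cancel, ← hi]; exact hmax hx⟩

theorem isCompact_setOf_probVector {α : Type*} (Γ : Finset α) :
    IsCompact {p : α → ℝ | (∀ i, 0 ≤ p i) ∧ (∀ i ∉ Γ, p i = 0) ∧ ∑ i ∈ Γ, p i = 1} := by
  refine (isCompact_univ_pi fun _ => isCompact_Icc (a := (0 : ℝ)) (b := 1)).of_isClosed_subset
    ?_ ?_
  · simp only [Set.ofPred_and, Set.ofPred_forall]
    exact (isClosed_iInter fun i => isClosed_le continuous_const (continuous_apply i)).inter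
      ((isClosed_iInter fun i => isClosed_iInter fun _ =>
        isClosed_eq (continuous_apply i) continuous_const).inter
      (isClosed_eq (continuous_finsetSum _ fun i _ => continuous_apply i) continuous_const))
  · rintro p ⟨hp0, hpΓ, hp1⟩ i -
    by_cases hi : i ∈ Γ
    · exact ⟨hp0 i, hp1 ▸ single_le_sum (fun j _ => hp0 j) hi⟩
    · simp [hpΓ i hi]

section
variable {d : ℕ}

def projModDist (N : ℕ) (Γ : Finset (Fin d → ℕ)) (p : (Fin d → ℕ) → ℝ) (v : Fin d → ℤ) :
    Fin N → ℝ :=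
  fun r => ∑ i ∈ Γ.filter (fun i => (∑ j, (i j : ℤ) * v j) % (N : ℤ) = (r : ℤ)), p i

theorem continuous_projModDist {N : ℕ} (Γ : Finset (Fin d → ℕ)) (v : Fin d → ℤ) :
    Continuous fun p => projModDist N Γ p v :=
  continuous_pi fun _ => continuous_finsetSum _ fun i _ => continuous_apply i

theorem projModDist_eq_sum_dotProduct {N : ℕ} [NeZero N] (Γ : Finset (Fin d → ℕ))
    (p : (Fin d → ℕ) → ℝ) (w : Fin d → ZMod N) (r : Fin N) :
    projModDist N Γ p (fun j => (w j).val) r = ∑ x with x ⬝ᵥ w = ZMod.finEquiv N r,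
      ∑ i ∈ Γ with (fun j => (i j : ZMod N)) = x, p i := by
  rw [sum_fiberwise_eq_sum_filter, projModDist]
  refine sum_congr (filter_congr fun i _ => ?_) fun _ _ => rfl
  rw [← ZMod.intCast_eq_finEquiv_iff, mem_filter]
  simp [dotProduct]

theorem exists_entropyBase_projModDist_lt_one {N : ℕ} (hN : 1 < N) {Γ : Finset (Fin d → ℕ)}
    (hΓ : ∀ i ∈ Γ, ∀ j, i j < N) {i₀ : Fin d → ℕ} (hi₀N : ∀ j, i₀ j < N) (hi₀Γ : i₀ ∉ Γ)
    {p : (Fin d → ℕ) → ℝ} (hp0 : ∀ i, 0 ≤ p i) (hp1 : ∑ i ∈ Γ, p i = 1) :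
    ∃ w : Fin d → ZMod N, w ≠ 0 ∧ entropyBase N (projModDist N Γ p fun j => (w j).val) < 1 := by
  have : NeZero N := ⟨by omega⟩
  set Q : (Fin d → ZMod N) → ℝ := fun x => ∑ i ∈ Γ with (fun j => (i j : ZMod N)) = x, p i
  have hQ0 : ∀ x, 0 ≤ Q x := fun x => sum_nonneg fun i _ => hp0 i
  have hQ1 : ∑ x, Q x = 1 := (sum_fiberwise _ _ _).trans hp1
  -- reduction mod `N` is injective on `{0, …, N-1}^d`, so the class of `i₀` carries no mass
  have hQi₀ : Q (fun j => (i₀ j : ZMod N)) = 0 := by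
    refine sum_eq_zero fun i hi => absurd ?_ hi₀Γ
    obtain ⟨hiΓ, hii₀⟩ := mem_filter.1 hi
    convert hiΓ
    funext j
    have := (ZMod.natCast_eq_natCast_iff' _ _ _).1 (congrFun hii₀ j)
    rwa [Nat.mod_eq_of_lt (hΓ i hiΓ j), Nat.mod_eq_of_lt (hi₀N j), eq_comm] at this
  obtain ⟨w, hw, s, hs⟩ := ZMod.exists_sum_dotProduct_ne_of_apply_eq_zero hN hQ0 hQ1 hQi₀
  refine ⟨w, hw, entropyBase_lt_one hN (fun r => ?_) ?_ ⟨(ZMod.finEquiv N).symm s, ?_⟩⟩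
  · rw [projModDist_eq_sum_dotProduct]
    exact sum_nonneg fun x _ => hQ0 x
  · simp_rw [projModDist_eq_sum_dotProduct]
    exact ((ZMod.finEquiv N).toEquiv.sum_comp fun s => ∑ x with x ⬝ᵥ w = s, Q x).trans
      ((sum_fiberwise _ _ _).trans hQ1)
  · rw [projModDist_eq_sum_dotProduct, RingEquiv.apply_symm_apply]
    exact hs

end

theorem stmt_16_general (d N : ℕ) (hN : 2 ≤ N)
    (Γ : Finset (Fin d → ℕ))
    (hΓsub : ∀ i ∈ Γ, ∀ j, i j < N)
    (hΓproper : ∃ i : Fin d → ℕ, (∀ j, i j < N) ∧ i ∉ Γ) :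
    ∃ V : Finset (Fin d → ℤ), (0 : Fin d → ℤ) ∉ V ∧ ∃ δ : ℝ, 0 < δ ∧
      ∀ p : (Fin d → ℕ) → ℝ, (∀ i, 0 ≤ p i) → (∀ i ∉ Γ, p i = 0) →
        ∑ i ∈ Γ, p i = 1 →
        ∃ v ∈ V, entropyBase N
            (fun r : Fin N =>
              ∑ i ∈ Γ.filter (fun i => (∑ j, (i j : ℤ) * v j) % (N : ℤ) = (r : ℤ)), p i) ≤
          1 - δ := by
  obtain ⟨i₀, hi₀N, hi₀Γ⟩ := hΓproper
  have : NeZero N := ⟨by omega⟩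
  let lift : {w : Fin d → ZMod N // w ≠ 0} → Fin d → ℤ := fun w j => (w.1 j).val
  obtain ⟨δ, hδ, hgap⟩ := (isCompact_setOf_probVector Γ).exists_pos_forall_exists_le_sub
    (f := fun w p => entropyBase N (projModDist N Γ p (lift w)))
    (fun w => (continuous_entropyBase N).comp (continuous_projModDist Γ _))
    fun p ⟨hp0, _, hp1⟩ => by
      obtain ⟨w, hw, hlt⟩ := exists_entropyBase_projModDist_lt_one hN hΓsub hi₀N hi₀Γ hp0 hp1
      exact ⟨⟨w, hw⟩, hlt⟩
  refine ⟨univ.image lift, ?_, δ, hδ, fun p hp0 hpΓ hp1 => ?_⟩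
  · simp only [mem_image, mem_univ, true_and, not_exists]
    rintro ⟨w, hw⟩ h
    exact hw (funext fun j => (ZMod.val_eq_zero _).1 (Int.ofNat_eq_zero.1 (congrFun h j)))
  · obtain ⟨w, hw⟩ := hgap p ⟨hp0, hpΓ, hp1⟩
    exact ⟨lift w, mem_image_of_mem _ (mem_univ _), hw⟩

theorem stmt_16 (d N : ℕ) (hd : 1 ≤ d) (hN : 2 ≤ N)
    (Γ : Finset (Fin d → ℕ)) (hΓne : Γ.Nonempty)
    (hΓsub : ∀ i ∈ Γ, ∀ j, i j < N)
    (hΓproper : ∃ i : Fin d → ℕ, (∀ j, i j < N) ∧ i ∉ Γ) :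
    ∃ V : Finset (Fin d → ℤ), (0 : Fin d → ℤ) ∉ V ∧ ∃ δ : ℝ, 0 < δ ∧
      ∀ p : (Fin d → ℕ) → ℝ, (∀ i, 0 ≤ p i) → (∀ i ∉ Γ, p i = 0) →
        ∑ i ∈ Γ, p i = 1 →
        ∃ v ∈ V, entropyBase N
            (fun r : Fin N =>
              ∑ i ∈ Γ.filter (fun i => (∑ j, (i j : ℤ) * v j) % (N : ℤ) = (r : ℤ)), p i) ≤
          1 - δ :=
  stmt_16_general d N hN Γ hΓsub hΓproper
end
end
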